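/- arXiv:2604.07149 — 3 statements merged into one kernel-verified Lean document; each statement's English description precedes it below -/
import Mathlib

section
/- Let 0 < Θ < π/4, 0 < φ < π/2 - 2Θ, θ ∈ (-Θ, Θ), r_θ := π sin Θ / sin(Θ + |θ|), and let λ ∈ ℂ with λ ≠ 0 and |arg λ| < π/2 + φ. Then for every r ∈ [0, r_θ], one has Re(√λ · (π - r e^{iθ})) ≥ 0, where √λ is the principal square root. -/
open Real Complex

/-!
With `α = arg λ / 2`, the real part equals `‖λ‖^{1/2} (π cos α - r cos (α + θ))`. Since
`sin (Θ + |θ|) cos α - sin Θ cos (α + θ) = sin |θ| cos (Θ ∓ α)`, with `∓` the sign of `θ`, is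
nonnegative whenever `|α| + Θ ≤ π/2`, the bound on `r` gives `r cos (α + θ) ≤ π cos α`.
-/

lemma Complex.re_cpow_ofReal_mul_sub_mul_exp (z : ℂ) (y a r θ : ℝ) :
    (z ^ (y : ℂ) * (a - r * exp (θ * I))).re
      = ‖z‖ ^ y * (a * Real.cos (arg z * y) - r * Real.cos (arg z * y + θ)) := by
  rw [mul_re, cpow_ofReal_re, cpow_ofReal_im, Real.cos_add]
  simp only [sub_re, sub_im, ofReal_re, ofReal_im, re_ofReal_mul, im_ofReal_mul,
    exp_ofReal_mul_I_re, exp_ofReal_mul_I_im]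
  ring

lemma Real.sin_add_mul_cos_sub_sin_mul_cos_add (Θ α t : ℝ) :
    Real.sin (Θ + t) * Real.cos α - Real.sin Θ * Real.cos (α + t) =
      Real.sin t * Real.cos (Θ - α) := by
  simp only [Real.sin_add, Real.cos_add, Real.cos_sub]
  ring

lemma Real.sin_mul_cos_add_le_sin_add_abs_mul_cos {Θ α θ : ℝ} (hα : |α| + |Θ| ≤ π / 2)
    (hθ : |θ| ≤ π) : Real.sin Θ * Real.cos (α + θ) ≤ Real.sin (Θ + |θ|) * Real.cos α := by
  have hcos : ∀ β, |β| ≤ |α| + |Θ| → 0 ≤ Real.cos β := fun β hβ =>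
    Real.cos_nonneg_of_mem_Icc (abs_le.1 (hβ.trans hα))
  have hsin : 0 ≤ Real.sin |θ| := Real.sin_nonneg_of_nonneg_of_le_pi (abs_nonneg θ) hθ
  rw [← sub_nonneg]
  rcases le_or_gt 0 θ with hθ0 | hθ0
  · rw [abs_of_nonneg hθ0] at hsin ⊢
    rw [sin_add_mul_cos_sub_sin_mul_cos_add]
    exact mul_nonneg hsin (hcos _ ((abs_sub _ _).trans_eq (add_comm _ _)))
  · rw [abs_of_neg hθ0] at hsin ⊢
    have hid := sin_add_mul_cos_sub_sin_mul_cos_add Θ (-α) (-θ)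
    rw [Real.cos_neg, ← neg_add, Real.cos_neg, sub_neg_eq_add] at hid
    rw [hid]
    exact mul_nonneg hsin (hcos _ ((abs_add_le _ _).trans_eq (add_comm _ _)))

lemma Real.mul_cos_add_le_pi_mul_cos {Θ α θ r : ℝ} (hα : |α| + Θ < π / 2) (hθ : |θ| < Θ)
    (hr : r ≤ π * Real.sin Θ / Real.sin (Θ + |θ|)) :
    r * Real.cos (α + θ) ≤ π * Real.cos α := by
  have hΘ : 0 < Θ := (abs_nonneg θ).trans_lt hθ
  have hsin : 0 < Real.sin (Θ + |θ|) :=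
    Real.sin_pos_of_pos_of_lt_pi (by positivity) (by linarith [abs_nonneg α])
  have hcos : 0 ≤ Real.cos (α + θ) := Real.cos_nonneg_of_mem_Icc
    (abs_le.1 (((abs_add_le α θ).trans (by linarith)) : |α + θ| ≤ π / 2))
  have key := sin_mul_cos_add_le_sin_add_abs_mul_cos (α := α) (θ := θ)
    (by rw [abs_of_pos hΘ]; linarith) (by linarith [abs_nonneg α])
  calc r * Real.cos (α + θ) ≤ π * Real.sin Θ / Real.sin (Θ + |θ|) * Real.cos (α + θ) :=
        mul_le_mul_of_nonneg_right hr hcos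
    _ = π * (Real.sin Θ * Real.cos (α + θ)) / Real.sin (Θ + |θ|) := by ring
    _ ≤ π * (Real.sin (Θ + |θ|) * Real.cos α) / Real.sin (Θ + |θ|) := by gcongr
    _ = π * Real.cos α := by field_simp

theorem re_sqrt_mul_nonneg_general (Θ φ θ : ℝ)
    (hφ : φ < π / 2 - 2 * Θ)
    (hθ : θ ∈ Set.Ioo (-Θ) Θ)
    (lam : ℂ) (harg : |Complex.arg lam| < π / 2 + φ)
    (r : ℝ) (hr : r ∈ Set.Icc 0 (π * Real.sin Θ / Real.sin (Θ + |θ|))) :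
    0 ≤ (lam ^ (1 / 2 : ℂ) * ((π : ℂ) - r * Complex.exp (θ * Complex.I))).re := by
  have hhalf : |arg lam * (1 / 2)| + Θ < π / 2 := by
    rw [abs_mul, abs_of_pos (one_half_pos : (0 : ℝ) < 1 / 2)]; linarith
  rw [show (1 / 2 : ℂ) = ((1 / 2 : ℝ) : ℂ) by push_cast; rfl, re_cpow_ofReal_mul_sub_mul_exp]
  exact mul_nonneg (by positivity)
    (sub_nonneg.2 (mul_cos_add_le_pi_mul_cos hhalf (abs_lt.2 hθ) hr.2))

theorem re_sqrt_mul_nonneg (Θ φ θ : ℝ) (hΘ0 : 0 < Θ) (hΘ : Θ < π / 4)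
    (hφ0 : 0 < φ) (hφ : φ < π / 2 - 2 * Θ)
    (hθ : θ ∈ Set.Ioo (-Θ) Θ)
    (lam : ℂ) (hlam : lam ≠ 0) (harg : |Complex.arg lam| < π / 2 + φ)
    (r : ℝ) (hr : r ∈ Set.Icc 0 (π * Real.sin Θ / Real.sin (Θ + |θ|))) :
    0 ≤ (lam ^ (1 / 2 : ℂ) * ((π : ℂ) - r * Complex.exp (θ * Complex.I))).re :=
  re_sqrt_mul_nonneg_general Θ φ θ hφ hθ lam harg r hr
end

section
/- Let 0 < δ < 1. Then there exists a constant C > 0, depending only on δ, such that for every continuously differentiable function f : (0, π) → ℂ with ∫₀^π x^{1+δ}(π-x)^{1+δ}(|f(x)|² + |f'(x)|²) dx < ∞, one has ∫₀^π |f(x)|² dx ≤ C ∫₀^π x^{1+δ}(π-x)^{1+δ}(|f(x)|² + |f'(x)|²) dx. -/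
/-!
For `0 < x ≤ x₀`, differentiating `x ^ δ * ‖f x‖ ^ 2` and absorbing the cross term
`2 x ^ δ ⟪f, f'⟫` by AM-GM gives
`x ^ δ ‖f x‖² ≤ x₀ ^ δ ‖f x₀‖² + δ⁻¹ ∫_x^{x₀} t ^ (1 + δ) ‖f' t‖²`,
and symmetrically with `π - x` for `x ≥ x₀`. Taking for `x₀` a point of `[π/4, 3π/4]` where `‖f‖²`
is at most its mean, both terms are bounded by the weighted energy, because the weight is bounded
below away from the endpoints. Thus `‖f x‖²` is at most `x ^ (-δ) + (π - x) ^ (-δ)` times a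
multiple of the energy, and this singular factor is integrable precisely because `δ < 1`.
-/

open Real MeasureTheory Set

lemma two_mul_rpow_mul_sub_le {s δ r u v : ℝ} (hs : 0 < s) (hδ : 0 < δ) (hr : r ≤ u * v) :
    2 * (s ^ δ * r) - δ * s ^ (δ - 1) * u ^ 2 ≤ δ⁻¹ * s ^ (1 + δ) * v ^ 2 := by
  rw [rpow_sub hs, rpow_add hs, rpow_one]
  have hsquare : δ⁻¹ * (s * s ^ δ) * v ^ 2 - 2 * (s ^ δ * (u * v)) + δ * (s ^ δ / s) * u ^ 2
      = s ^ δ / (δ * s) * (δ * u - s * v) ^ 2 := by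
    field_simp
    ring
  have hsr : s ^ δ * r ≤ s ^ δ * (u * v) := mul_le_mul_of_nonneg_left hr (by positivity)
  linarith [show 0 ≤ s ^ δ / (δ * s) * (δ * u - s * v) ^ 2 by positivity]

lemma le_inv_mul_mul_add {m A p q : ℝ} (hm : 0 < m) (hA : m ≤ A) (hp : 0 ≤ p) (hq : 0 ≤ q) :
    p ≤ m⁻¹ * (A * (p + q)) := by
  rw [← div_eq_inv_mul, le_div_iff₀ hm]
  nlinarith

lemma le_rpow_neg_add_rpow_neg_mul {s s' δ n B : ℝ} (hs : 0 < s) (hs' : 0 < s') (hn : 0 ≤ n)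
    (h : s ^ δ * n ≤ B ∨ s' ^ δ * n ≤ B) : n ≤ (s ^ (-δ) + s' ^ (-δ)) * B := by
  obtain ⟨r, hr, hrB, hsum⟩ : ∃ r, 0 < r ∧ r ^ δ * n ≤ B ∧ r ^ (-δ) ≤ s ^ (-δ) + s' ^ (-δ) := by
    rcases h with h | h
    · exact ⟨s, hs, h, le_add_of_nonneg_right (rpow_nonneg hs'.le _)⟩
    · exact ⟨s', hs', h, le_add_of_nonneg_left (rpow_nonneg hs.le _)⟩
  have hB : 0 ≤ B := (by positivity : 0 ≤ r ^ δ * n).trans hrB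
  calc n = r ^ (-δ) * (r ^ δ * n) := by
        rw [rpow_neg hr.le, inv_mul_cancel_left₀ (rpow_pos_of_pos hr δ).ne']
    _ ≤ r ^ (-δ) * B := by gcongr
    _ ≤ (s ^ (-δ) + s' ^ (-δ)) * B := by gcongr

lemma rpow_mul_sub_rpow_mul_nonneg {b p t g : ℝ} (ht : t ∈ Ioo 0 b) (hg : 0 ≤ g) :
    0 ≤ t ^ p * (b - t) ^ p * g :=
  mul_nonneg (mul_nonneg (rpow_nonneg ht.1.le _) (rpow_nonneg (sub_nonneg.2 ht.2.le) _)) hg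

lemma setIntegral_le_mul_setIntegral_of_subset {α : Type*} [MeasurableSpace α] {μ : Measure α}
    {φ W : α → ℝ} {s t : Set α} {c : ℝ} (hs : MeasurableSet s) (ht : MeasurableSet t)
    (hst : s ⊆ t) (hc : 0 ≤ c) (hW : IntegrableOn W t μ) (hW0 : ∀ x ∈ t, 0 ≤ W x)
    (hφ0 : ∀ x ∈ s, 0 ≤ φ x) (hφW : ∀ x ∈ s, φ x ≤ c * W x) :
    ∫ x in s, φ x ∂μ ≤ c * ∫ x in t, W x ∂μ :=
  calc ∫ x in s, φ x ∂μ ≤ ∫ x in s, c * W x ∂μ :=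
        integral_mono_of_nonneg (ae_restrict_of_forall_mem hs hφ0)
          ((hW.mono_set hst).const_mul c) (ae_restrict_of_forall_mem hs hφW)
    _ = c * ∫ x in s, W x ∂μ := integral_const_mul c _
    _ ≤ c * ∫ x in t, W x ∂μ := mul_le_mul_of_nonneg_left
        (setIntegral_mono_set hW (ae_restrict_of_forall_mem ht hW0) hst.eventuallyLE) hc

lemma intervalIntegrable_rpow_neg_add_sub_rpow_neg {b δ : ℝ} (hδ : δ < 1) :
    IntervalIntegrable (fun x => x ^ (-δ) + (b - x) ^ (-δ)) volume 0 b := by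
  have h := intervalIntegral.intervalIntegrable_rpow' (a := 0) (b := b) (r := -δ) (by linarith)
  refine h.add ?_
  simpa using (h.comp_sub_left b).symm

lemma integral_rpow_neg_add_sub_rpow_neg {b δ : ℝ} (hδ : δ < 1) :
    ∫ x in 0..b, (x ^ (-δ) + (b - x) ^ (-δ)) = 2 * b ^ (1 - δ) / (1 - δ) := by
  have hr : -1 < -δ := by linarith
  have h := intervalIntegral.intervalIntegrable_rpow' (a := 0) (b := b) hr
  rw [intervalIntegral.integral_add h (by simpa using (h.comp_sub_left b).symm),
    intervalIntegral.integral_comp_sub_left (fun x => x ^ (-δ)), sub_self, sub_zero,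
    integral_rpow (Or.inl hr), neg_add_eq_sub, zero_rpow (by linarith)]
  ring

section InnerProduct

variable {E : Type*} [NormedAddCommGroup E] [InnerProductSpace ℝ E]

lemma rpow_mul_norm_sq_le_of_hasDerivAt_left {f f' : ℝ → E} {a x y δ : ℝ} (hδ : 0 < δ)
    (hax : a < x) (hxy : x ≤ y) (hf : ∀ t ∈ Icc x y, HasDerivAt f (f' t) t)
    (hf' : ContinuousOn f' (Icc x y)) :
    (x - a) ^ δ * ‖f x‖ ^ 2
      ≤ (y - a) ^ δ * ‖f y‖ ^ 2 + δ⁻¹ * ∫ t in x..y, (t - a) ^ (1 + δ) * ‖f' t‖ ^ 2 := by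
  have hpos : ∀ t ∈ Icc x y, 0 < t - a := fun t ht => by linarith [ht.1]
  have hderiv : ∀ t ∈ Icc x y, HasDerivAt (fun t => -((t - a) ^ δ * ‖f t‖ ^ 2))
      (2 * ((t - a) ^ δ * -inner ℝ (f t) (f' t)) - δ * (t - a) ^ (δ - 1) * ‖f t‖ ^ 2) t := by
    intro t ht
    have hs := ((hasDerivAt_id' t).sub_const a).rpow_const (p := δ) (Or.inl (hpos t ht).ne')
    exact (hs.mul (hf t ht).norm_sq).neg.congr_deriv (by ring)
  have hint : IntegrableOn (fun t => δ⁻¹ * (t - a) ^ (1 + δ) * ‖f' t‖ ^ 2) (Icc x y) := by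
    refine ContinuousOn.integrableOn_Icc ((continuousOn_const.mul ?_).mul (hf'.norm.pow 2))
    exact (continuousOn_id.sub continuousOn_const).rpow_const fun t ht => Or.inl (hpos t ht).ne'
  have key := intervalIntegral.sub_le_integral_of_hasDeriv_right_of_le hxy
    (fun t ht => (hderiv t ht).continuousAt.continuousWithinAt)
    (fun t ht => (hderiv t (Ioo_subset_Icc_self ht)).hasDerivWithinAt) hint
    (fun t ht => two_mul_rpow_mul_sub_le (hpos t (Ioo_subset_Icc_self ht)) hδ
      ((neg_le_abs _).trans (abs_real_inner_le_norm _ _)))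
  simp only [mul_assoc, intervalIntegral.integral_const_mul] at key ⊢
  linarith

lemma rpow_mul_norm_sq_le_of_hasDerivAt_right {f f' : ℝ → E} {b x y δ : ℝ} (hδ : 0 < δ)
    (hyb : y < b) (hxy : x ≤ y) (hf : ∀ t ∈ Icc x y, HasDerivAt f (f' t) t)
    (hf' : ContinuousOn f' (Icc x y)) :
    (b - y) ^ δ * ‖f y‖ ^ 2
      ≤ (b - x) ^ δ * ‖f x‖ ^ 2 + δ⁻¹ * ∫ t in x..y, (b - t) ^ (1 + δ) * ‖f' t‖ ^ 2 := by
  have hpos : ∀ t ∈ Icc x y, 0 < b - t := fun t ht => by linarith [ht.2]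
  have hderiv : ∀ t ∈ Icc x y, HasDerivAt (fun t => (b - t) ^ δ * ‖f t‖ ^ 2)
      (2 * ((b - t) ^ δ * inner ℝ (f t) (f' t)) - δ * (b - t) ^ (δ - 1) * ‖f t‖ ^ 2) t := by
    intro t ht
    have hs := ((hasDerivAt_id' t).const_sub b).rpow_const (p := δ) (Or.inl (hpos t ht).ne')
    exact (hs.mul (hf t ht).norm_sq).congr_deriv (by ring)
  have hint : IntegrableOn (fun t => δ⁻¹ * (b - t) ^ (1 + δ) * ‖f' t‖ ^ 2) (Icc x y) := by
    refine ContinuousOn.integrableOn_Icc ((continuousOn_const.mul ?_).mul (hf'.norm.pow 2))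
    exact (continuousOn_const.sub continuousOn_id).rpow_const fun t ht => Or.inl (hpos t ht).ne'
  have key := intervalIntegral.sub_le_integral_of_hasDeriv_right_of_le hxy
    (fun t ht => (hderiv t ht).continuousAt.continuousWithinAt)
    (fun t ht => (hderiv t (Ioo_subset_Icc_self ht)).hasDerivWithinAt) hint
    (fun t ht => two_mul_rpow_mul_sub_le (hpos t (Ioo_subset_Icc_self ht)) hδ
      (real_inner_le_norm _ _))
  simp only [mul_assoc, intervalIntegral.integral_const_mul] at key ⊢
  linarith

end InnerProduct

section Interval

variable {E : Type*} [NormedAddCommGroup E] {b p : ℝ} {f f' : ℝ → E}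

lemma integral_rpow_mul_norm_sq_le_left {x y : ℝ} (hp : 0 ≤ p) (hx : 0 < x) (hxy : x ≤ y)
    (hy : y ≤ 3 * b / 4)
    (hW : IntegrableOn (fun t => t ^ p * (b - t) ^ p * (‖f t‖ ^ 2 + ‖f' t‖ ^ 2)) (Ioo 0 b)) :
    ∫ t in x..y, t ^ p * ‖f' t‖ ^ 2 ≤
      ((b / 4) ^ p)⁻¹ * ∫ t in Ioo 0 b, t ^ p * (b - t) ^ p * (‖f t‖ ^ 2 + ‖f' t‖ ^ 2) := by
  have hb : 0 < b := by linarith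
  rw [intervalIntegral.integral_of_le hxy]
  refine setIntegral_le_mul_setIntegral_of_subset measurableSet_Ioc measurableSet_Ioo
    (fun t ht => ⟨hx.trans ht.1, by linarith [ht.2]⟩) (by positivity) hW
    (fun t ht => rpow_mul_sub_rpow_mul_nonneg ht (by positivity))
    (fun t ht => mul_nonneg (rpow_nonneg (hx.trans ht.1).le _) (by positivity)) fun t ht => ?_
  have ht0 : 0 ≤ t ^ p := rpow_nonneg (hx.trans ht.1).le _
  calc t ^ p * ‖f' t‖ ^ 2
      ≤ ((b / 4) ^ p)⁻¹ * ((b - t) ^ p * (t ^ p * ‖f' t‖ ^ 2 + t ^ p * ‖f t‖ ^ 2)) :=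
        le_inv_mul_mul_add (by positivity) (rpow_le_rpow (by positivity) (by linarith [ht.2]) hp)
          (by positivity) (by positivity)
    _ = _ := by ring

lemma integral_sub_rpow_mul_norm_sq_le_right {x y : ℝ} (hp : 0 ≤ p) (hx : b / 4 ≤ x)
    (hxy : x ≤ y) (hy : y < b)
    (hW : IntegrableOn (fun t => t ^ p * (b - t) ^ p * (‖f t‖ ^ 2 + ‖f' t‖ ^ 2)) (Ioo 0 b)) :
    ∫ t in x..y, (b - t) ^ p * ‖f' t‖ ^ 2 ≤
      ((b / 4) ^ p)⁻¹ * ∫ t in Ioo 0 b, t ^ p * (b - t) ^ p * (‖f t‖ ^ 2 + ‖f' t‖ ^ 2) := by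
  have hb : 0 < b := by linarith
  rw [intervalIntegral.integral_of_le hxy]
  refine setIntegral_le_mul_setIntegral_of_subset measurableSet_Ioc measurableSet_Ioo
    (fun t ht => ⟨by linarith [ht.1], ht.2.trans_lt hy⟩) (by positivity) hW
    (fun t ht => rpow_mul_sub_rpow_mul_nonneg ht (by positivity))
    (fun t ht => mul_nonneg (rpow_nonneg (by linarith [ht.2]) _) (by positivity)) fun t ht => ?_
  have ht0 : 0 ≤ (b - t) ^ p := rpow_nonneg (by linarith [ht.2]) _
  calc (b - t) ^ p * ‖f' t‖ ^ 2
      ≤ ((b / 4) ^ p)⁻¹ * (t ^ p * ((b - t) ^ p * ‖f' t‖ ^ 2 + (b - t) ^ p * ‖f t‖ ^ 2)) :=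
        le_inv_mul_mul_add (by positivity) (rpow_le_rpow (by positivity) (by linarith [ht.1]) hp)
          (by positivity) (by positivity)
    _ = _ := by ring

lemma exists_norm_sq_le_mul_integral (hb : 0 < b) (hp : 0 ≤ p)
    (hf : ContinuousOn f (Icc (b / 4) (3 * b / 4)))
    (hW : IntegrableOn (fun t => t ^ p * (b - t) ^ p * (‖f t‖ ^ 2 + ‖f' t‖ ^ 2)) (Ioo 0 b)) :
    ∃ x₀ ∈ Icc (b / 4) (3 * b / 4), ‖f x₀‖ ^ 2 ≤ 2 / b * (((b / 4) ^ p * (b / 4) ^ p)⁻¹ *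
      ∫ t in Ioo 0 b, t ^ p * (b - t) ^ p * (‖f t‖ ^ 2 + ‖f' t‖ ^ 2)) := by
  have hJ : volume (Icc (b / 4) (3 * b / 4)) ≠ 0 := by
    rw [Real.volume_Icc, Ne, ENNReal.ofReal_eq_zero, not_le]
    linarith
  obtain ⟨x₀, hx₀, hle⟩ := exists_le_setAverage hJ measure_Icc_lt_top.ne
    (hf.norm.pow 2).integrableOn_Icc
  refine ⟨x₀, hx₀, hle.trans ?_⟩
  rw [setAverage_eq, volume_real_Icc_of_le (by linarith), smul_eq_mul,
    show 3 * b / 4 - b / 4 = b / 2 by ring, inv_div]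
  refine mul_le_mul_of_nonneg_left (setIntegral_le_mul_setIntegral_of_subset
    (φ := fun t => ‖f t‖ ^ 2) measurableSet_Icc measurableSet_Ioo
    (fun t ht => ⟨by linarith [ht.1], by linarith [ht.2]⟩) (by positivity) hW
    (fun t ht => rpow_mul_sub_rpow_mul_nonneg ht (by positivity)) (fun t _ => by positivity)
    fun t ht => le_inv_mul_mul_add (q := ‖f' t‖ ^ 2) (by positivity) ?_ (by positivity)
      (by positivity)) (by positivity)
  exact mul_le_mul (rpow_le_rpow (by positivity) ht.1 hp)
    (rpow_le_rpow (by positivity) (by linarith [ht.2]) hp) (by positivity)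
    (rpow_nonneg (by linarith [ht.1]) _)

end Interval

lemma exists_forall_norm_sq_le_rpow_neg_add {E : Type*} [NormedAddCommGroup E]
    [InnerProductSpace ℝ E] {b δ : ℝ} (hb : 0 < b) (hδ : 0 < δ) :
    ∃ K > 0, ∀ f f' : ℝ → E, (∀ x ∈ Ioo 0 b, HasDerivAt f (f' x) x) →
      ContinuousOn f' (Ioo 0 b) →
      IntegrableOn (fun t => t ^ (1 + δ) * (b - t) ^ (1 + δ) * (‖f t‖ ^ 2 + ‖f' t‖ ^ 2))
        (Ioo 0 b) →
      ∀ x ∈ Ioo 0 b, ‖f x‖ ^ 2 ≤ (x ^ (-δ) + (b - x) ^ (-δ)) *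
        (K * ∫ t in Ioo 0 b, t ^ (1 + δ) * (b - t) ^ (1 + δ) * (‖f t‖ ^ 2 + ‖f' t‖ ^ 2)) := by
  set m := (b / 4) ^ (1 + δ)
  refine ⟨b ^ δ * (2 / b * (m * m)⁻¹) + δ⁻¹ * m⁻¹, by positivity,
    fun f f' hf hf' hW x hx => ?_⟩
  set I := ∫ t in Ioo 0 b, t ^ (1 + δ) * (b - t) ^ (1 + δ) * (‖f t‖ ^ 2 + ‖f' t‖ ^ 2)
  have hsub : ∀ {u v : ℝ}, 0 < u → v < b → Icc u v ⊆ Ioo 0 b :=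
    fun hu hv t ht => ⟨hu.trans_le ht.1, ht.2.trans_lt hv⟩
  obtain ⟨x₀, hx₀, hfx₀⟩ := exists_norm_sq_le_mul_integral hb (by linarith)
    (fun t ht => (hf t (hsub (by positivity) (by linarith) ht)).continuousAt.continuousWithinAt) hW
  have hvalue : ∀ s ≤ b, 0 ≤ s → s ^ δ * ‖f x₀‖ ^ 2 ≤ b ^ δ * (2 / b * ((m * m)⁻¹ * I)) :=
    fun s hs hs0 => mul_le_mul (rpow_le_rpow hs0 hs hδ.le) hfx₀ (by positivity) (by positivity)
  refine le_rpow_neg_add_rpow_neg_mul hx.1 (sub_pos.2 hx.2) (by positivity) ?_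
  rcases le_total x x₀ with hxx₀ | hx₀x
  · have hIcc := hsub hx.1 (show x₀ < b by linarith [hx₀.2])
    have hgr := rpow_mul_norm_sq_le_of_hasDerivAt_left (a := 0) hδ hx.1 hxx₀
      (fun t ht => hf t (hIcc ht)) (hf'.mono hIcc)
    have htail := integral_rpow_mul_norm_sq_le_left (by linarith) hx.1 hxx₀ hx₀.2 hW
    simp only [sub_zero] at hgr
    refine Or.inl (hgr.trans ?_)
    calc x₀ ^ δ * ‖f x₀‖ ^ 2 + δ⁻¹ * ∫ t in x..x₀, t ^ (1 + δ) * ‖f' t‖ ^ 2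
        ≤ b ^ δ * (2 / b * ((m * m)⁻¹ * I)) + δ⁻¹ * (m⁻¹ * I) :=
          add_le_add (hvalue _ (by linarith [hx₀.2]) (by linarith [hx₀.1]))
            (mul_le_mul_of_nonneg_left htail (by positivity))
      _ = _ := by ring
  · have hIcc := hsub (show 0 < x₀ by linarith [hx₀.1]) hx.2
    have hgr := rpow_mul_norm_sq_le_of_hasDerivAt_right hδ hx.2 hx₀x
      (fun t ht => hf t (hIcc ht)) (hf'.mono hIcc)
    have htail := integral_sub_rpow_mul_norm_sq_le_right (by linarith) hx₀.1 hx₀x hx.2 hW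
    refine Or.inr (hgr.trans ?_)
    calc (b - x₀) ^ δ * ‖f x₀‖ ^ 2 + δ⁻¹ * ∫ t in x₀..x, (b - t) ^ (1 + δ) * ‖f' t‖ ^ 2
        ≤ b ^ δ * (2 / b * ((m * m)⁻¹ * I)) + δ⁻¹ * (m⁻¹ * I) :=
          add_le_add (hvalue _ (by linarith [hx₀.1]) (by linarith [hx₀.2]))
            (mul_le_mul_of_nonneg_left htail (by positivity))
      _ = _ := by ring

theorem weighted_hardy_poincare (δ : ℝ) (hδ0 : 0 < δ) (hδ1 : δ < 1) :
    ∃ C > 0, ∀ (f f' : ℝ → ℂ),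
      (∀ x ∈ Set.Ioo (0 : ℝ) π, HasDerivAt f (f' x) x) →
      ContinuousOn f' (Set.Ioo 0 π) →
      IntegrableOn
        (fun x : ℝ => x ^ (1 + δ) * (π - x) ^ (1 + δ) * (‖f x‖ ^ 2 + ‖f' x‖ ^ 2))
        (Set.Ioo 0 π) →
      ∫ x in Set.Ioo (0 : ℝ) π, ‖f x‖ ^ 2 ≤
        C * ∫ x in Set.Ioo (0 : ℝ) π,
          x ^ (1 + δ) * (π - x) ^ (1 + δ) * (‖f x‖ ^ 2 + ‖f' x‖ ^ 2) := by
  obtain ⟨K, hK, hpointwise⟩ := exists_forall_norm_sq_le_rpow_neg_add (E := ℂ) pi_pos hδ0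
  have hδ1' : 0 < 1 - δ := by linarith
  refine ⟨2 * π ^ (1 - δ) / (1 - δ) * K, by positivity, fun f f' hf hf' hW => ?_⟩
  have hsingular : IntegrableOn (fun x => x ^ (-δ) + (π - x) ^ (-δ)) (Ioo 0 π) :=
    (intervalIntegrable_iff_integrableOn_Ioo_of_le pi_pos.le).1
      (intervalIntegrable_rpow_neg_add_sub_rpow_neg hδ1)
  calc ∫ x in Ioo 0 π, ‖f x‖ ^ 2
      ≤ ∫ x in Ioo 0 π, (x ^ (-δ) + (π - x) ^ (-δ)) *
          (K * ∫ t in Ioo 0 π, t ^ (1 + δ) * (π - t) ^ (1 + δ) * (‖f t‖ ^ 2 + ‖f' t‖ ^ 2)) :=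
        integral_mono_of_nonneg (ae_of_all _ fun x => by positivity) (hsingular.mul_const _)
          (ae_restrict_of_forall_mem measurableSet_Ioo (hpointwise f f' hf hf' hW))
    _ = _ := by
        rw [integral_mul_const, ← integral_Ioc_eq_integral_Ioo,
          ← intervalIntegral.integral_of_le pi_pos.le, integral_rpow_neg_add_sub_rpow_neg hδ1]
        ring
end

section
/- Let a, b > 0 and c ≥ 0, γ ≥ 0 be constants, and let k ∈ ℤ with |k| ≥ 2, or more generally k ∈ ℤ \ {-1, 0}. Then ∫₀^{2π} k² e^{-b k² / t} · t^{-(3+2γ)} dt ≤ C e^{-b k² / (2π)} where C = (a'/(b(2πb)^{1+2γ})) ∫₀^∞ (2πu + b)^{1+2γ} e^{-u} du for a suitable constant a' depending only on a, b, γ. In particular, ∑_{k ∈ ℤ, |k| ≥ 1} k² ∫₀^{2π} e^{-b k²/t} t^{-(3+2γ)} dt < ∞. -/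
/-!
Write `K = b k²`, `q = 3 + 2γ`, `T = 2π` and split `e^{-K/t} = e^{-K/(2t)} · e^{-K/(2t)}`.
The factor `K e^{-K/(2t)} / t²` is an exact derivative, with integral `2 e^{-K/(2T)}` over
`(0, T)`. For `K ≥ b` the other factor, times `t^{-(q-2)}`, is at most
`e^{-(K-b)/(2T)} · sup_{0<t≤T} t^{-(q-2)} e^{-b/(2t)}`, and that supremum is finite because the
function tends to `0` as `t → 0⁺`. Together this gives the rate `e^{-K/T}` with a constant
uniform in `k ≠ 0`, and summability over `k` follows from that of `e^{-c k²}`.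
-/

open Real MeasureTheory Set Filter Topology

lemma tendsto_rpow_neg_mul_exp_neg_div_nhdsGT_zero (p : ℝ) {b : ℝ} (hb : 0 < b) :
    Tendsto (fun t => t ^ (-p) * exp (-b / t)) (𝓝[>] 0) (𝓝 0) := by
  refine ((tendsto_rpow_mul_exp_neg_mul_atTop_nhds_zero p b hb).comp
    tendsto_inv_nhdsGT_zero).congr' ?_
  filter_upwards [self_mem_nhdsWithin] with t ht
  simp [rpow_neg ht.le, inv_rpow ht.le, div_eq_mul_inv]

lemma exists_rpow_neg_mul_exp_neg_div_le (p : ℝ) {b : ℝ} (hb : 0 < b) (T : ℝ) :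
    ∃ M > 0, ∀ t ∈ Ioc 0 T, t ^ (-p) * exp (-b / t) ≤ M := by
  obtain ⟨δ, hδ, hsmall⟩ : ∃ δ > 0, ∀ t ∈ Ioo 0 δ, t ^ (-p) * exp (-b / t) ≤ 1 := by
    obtain ⟨δ, hδ, hsub⟩ := mem_nhdsGT_iff_exists_Ioo_subset.1
      ((tendsto_rpow_neg_mul_exp_neg_div_nhdsGT_zero p hb).eventually (eventually_le_nhds one_pos))
    exact ⟨δ, hδ, fun t ht => hsub ht⟩
  obtain ⟨C, hC⟩ := (isCompact_Icc (a := δ) (b := T)).exists_bound_of_continuousOn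
    (f := fun t => t ^ (-p) * exp (-b / t)) <| by
      refine ContinuousOn.mul (continuousOn_id.rpow_const fun t ht => Or.inl ?_) ?_
      · exact (hδ.trans_le ht.1).ne'
      · exact (continuousOn_const.div continuousOn_id fun t ht => (hδ.trans_le ht.1).ne').rexp
  refine ⟨max 1 C, by positivity, fun t ht => ?_⟩
  rcases lt_or_ge t δ with htδ | hδt
  · exact (hsmall t ⟨ht.1, htδ⟩).trans (le_max_left _ _)
  · exact (le_abs_self _).trans ((hC t ⟨hδt, ht.2⟩).trans (le_max_right _ _))

lemma integrableOn_exp_neg_div_div_sq {c : ℝ} (hc : 0 < c) (T : ℝ) :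
    IntegrableOn (fun t => exp (-c / t) / t ^ 2) (Ioo 0 T) := by
  obtain ⟨M, -, hM⟩ := exists_rpow_neg_mul_exp_neg_div_le 2 hc T
  refine IntegrableOn.of_bound measure_Ioo_lt_top
    (Measurable.aestronglyMeasurable (by fun_prop)) M ?_
  filter_upwards [ae_restrict_mem measurableSet_Ioo] with t ht
  rw [Real.norm_of_nonneg (by positivity), div_eq_inv_mul, ← rpow_two, ← rpow_neg ht.1.le]
  exact hM t (Ioo_subset_Ioc_self ht)

lemma integral_exp_neg_div_div_sq {c T : ℝ} (hc : 0 < c) (hT : 0 < T) :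
    ∫ t in Ioo 0 T, exp (-c / t) / t ^ 2 = exp (-c / T) / c := by
  have hderiv : ∀ t ∈ Ioo 0 T,
      HasDerivAt (fun t => exp (-c / t) / c) (exp (-c / t) / t ^ 2) t := by
    intro t ht
    have := (((hasDerivAt_inv ht.1.ne').const_mul (-c)).exp).div_const c
    simp only [← div_eq_mul_inv] at this
    exact this.congr_deriv (by field_simp)
  have hzero : Tendsto (fun t => exp (-c / t) / c) (𝓝[>] 0) (𝓝 0) := by
    have : Tendsto (fun t => -c / t) (𝓝[>] 0) atBot := by
      simpa [div_eq_mul_inv] using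
        tendsto_inv_nhdsGT_zero.const_mul_atTop_of_neg (neg_neg_of_pos hc)
    simpa using (tendsto_exp_atBot.comp this).div_const c
  have hT' : Tendsto (fun t => exp (-c / t) / c) (𝓝[<] T) (𝓝 (exp (-c / T) / c)) :=
    ((continuousAt_const.div continuousAt_id hT.ne').rexp.div_const c).tendsto.mono_left
      nhdsWithin_le_nhds
  rw [← integral_Ioc_eq_integral_Ioo, ← intervalIntegral.integral_of_le hT.le,
    intervalIntegral.integral_eq_sub_of_hasDerivAt_of_tendsto hT hderiv
      ((intervalIntegrable_iff_integrableOn_Ioo_of_le hT.le).2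
        (integrableOn_exp_neg_div_div_sq hc T)) hzero hT', sub_zero]

lemma exp_neg_div_le_exp_mul_exp_neg_div {a c t T : ℝ} (hac : a ≤ c) (ht : 0 < t)
    (htT : t ≤ T) :
    exp (-c / t) ≤ exp (a / T - c / T) * exp (-a / t) := by
  rw [← exp_add, exp_le_exp]
  have := div_le_div_of_nonneg_left (sub_nonneg.2 hac) ht htT
  rw [sub_div, sub_div] at this
  rw [neg_div, neg_div]
  linarith

lemma exists_integral_mul_exp_neg_div_mul_rpow_le (q : ℝ) {b T : ℝ} (hb : 0 < b) (hT : 0 < T) :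
    ∃ C > 0, ∀ c, b ≤ c →
      ∫ t in Ioo 0 T, c * exp (-c / t) * t ^ (-q) ≤ C * exp (-c / T) := by
  obtain ⟨M, hM, hbound⟩ := exists_rpow_neg_mul_exp_neg_div_le (q - 2) (half_pos hb) T
  refine ⟨2 * exp (b / 2 / T) * M, by positivity, fun c hbc => ?_⟩
  have hc : 0 < c := hb.trans_le hbc
  have hc2 : 0 < c / 2 := half_pos hc
  set A := c * exp (b / 2 / T - c / 2 / T) * M
  have hpt : ∀ t ∈ Ioo 0 T,
      c * exp (-c / t) * t ^ (-q) ≤ A * (exp (-(c / 2) / t) / t ^ 2) := by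
    rintro t ⟨ht, htT⟩
    have hsplit : c * exp (-c / t) * t ^ (-q) =
        c * (exp (-(c / 2) / t) / t ^ 2) * (t ^ (-(q - 2)) * exp (-(c / 2) / t)) := by
      have : t ^ (-q) = t ^ (-(q - 2)) * (t ^ 2)⁻¹ := by
        rw [← rpow_two, ← rpow_neg ht.le, ← rpow_add ht]; ring_nf
      have hexp : exp (-c / t) = exp (-(c / 2) / t) * exp (-(c / 2) / t) := by
        rw [← exp_add]; ring_nf
      rw [this, hexp]; ring
    have hdecay : t ^ (-(q - 2)) * exp (-(c / 2) / t) ≤ exp (b / 2 / T - c / 2 / T) * M :=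
      calc t ^ (-(q - 2)) * exp (-(c / 2) / t)
          ≤ t ^ (-(q - 2)) * (exp (b / 2 / T - c / 2 / T) * exp (-(b / 2) / t)) := by
            gcongr; exact exp_neg_div_le_exp_mul_exp_neg_div (by linarith) ht htT.le
        _ = exp (b / 2 / T - c / 2 / T) * (t ^ (-(q - 2)) * exp (-(b / 2) / t)) := by ring
        _ ≤ exp (b / 2 / T - c / 2 / T) * M := by gcongr; exact hbound t ⟨ht, htT.le⟩
    rw [hsplit, show A * (exp (-(c / 2) / t) / t ^ 2) =
      c * (exp (-(c / 2) / t) / t ^ 2) * (exp (b / 2 / T - c / 2 / T) * M) by ring]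
    gcongr
  calc ∫ t in Ioo 0 T, c * exp (-c / t) * t ^ (-q)
      ≤ ∫ t in Ioo 0 T, A * (exp (-(c / 2) / t) / t ^ 2) := by
        refine integral_mono_of_nonneg ?_ ((integrableOn_exp_neg_div_div_sq hc2 T).const_mul A) ?_
        all_goals filter_upwards [ae_restrict_mem measurableSet_Ioo] with t ht
        · have := ht.1; positivity
        · exact hpt t ht
    _ = A * (exp (-(c / 2) / T) / (c / 2)) := by
        rw [integral_const_mul, integral_exp_neg_div_div_sq hc2 hT]
    _ = 2 * exp (b / 2 / T) * M * exp (-c / T) := by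
        simp only [A, sub_eq_add_neg, exp_add]
        field_simp
        rw [← exp_nat_mul]; ring_nf

lemma summable_int_exp_neg_mul_sq {c : ℝ} (hc : 0 < c) :
    Summable fun k : ℤ => exp (-c * (k : ℝ) ^ 2) := by
  have hnat : Summable fun n : ℕ => exp (-c * (n : ℝ) ^ 2) :=
    summable_exp_nat_mul_of_ge (neg_neg_of_pos hc) fun n => by
      exact_mod_cast Nat.le_self_pow two_ne_zero n
  exact .of_nat_of_neg (by simpa using hnat) (by simpa using hnat)

lemma exists_integral_sq_mul_exp_neg_mul_sq_div_mul_rpow_le (q : ℝ) {b T : ℝ} (hb : 0 < b)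
    (hT : 0 < T) :
    ∃ C > 0, ∀ k : ℤ, k ≠ 0 →
      ∫ t in Ioo 0 T, (k : ℝ) ^ 2 * exp (-(b * (k : ℝ) ^ 2) / t) * t ^ (-q) ≤
        C * exp (-(b * (k : ℝ) ^ 2) / T) := by
  obtain ⟨C, hC, hdecay⟩ := exists_integral_mul_exp_neg_div_mul_rpow_le q hb hT
  refine ⟨C / b, by positivity, fun k hk => ?_⟩
  have hk2 : (1 : ℝ) ≤ (k : ℝ) ^ 2 := by
    rw [one_le_sq_iff_one_le_abs]; exact_mod_cast Int.one_le_abs hk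
  calc ∫ t in Ioo 0 T, (k : ℝ) ^ 2 * exp (-(b * (k : ℝ) ^ 2) / t) * t ^ (-q)
      = b⁻¹ * ∫ t in Ioo 0 T,
          b * (k : ℝ) ^ 2 * exp (-(b * (k : ℝ) ^ 2) / t) * t ^ (-q) := by
        rw [← integral_const_mul]; congr 1; ext t; field_simp
    _ ≤ b⁻¹ * (C * exp (-(b * (k : ℝ) ^ 2) / T)) := by
        gcongr; exact hdecay _ (le_mul_of_one_le_right hb.le hk2)
    _ = C / b * exp (-(b * (k : ℝ) ^ 2) / T) := by ring

theorem gaussian_kernel_integral_decay_general (b γ : ℝ) (hb : 0 < b) :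
    (∃ C > 0, ∀ k : ℤ, k ≠ 0 →
      (∫ t in Set.Ioo (0 : ℝ) (2 * π),
          (k : ℝ) ^ 2 * Real.exp (-(b * (k : ℝ) ^ 2) / t) * t ^ (-(3 + 2 * γ))) ≤
        C * Real.exp (-(b * (k : ℝ) ^ 2) / (2 * π))) ∧
    Summable (fun k : {k : ℤ // k ≠ 0} =>
      ((k : ℤ) : ℝ) ^ 2 *
        ∫ t in Set.Ioo (0 : ℝ) (2 * π),
          Real.exp (-(b * ((k : ℤ) : ℝ) ^ 2) / t) * t ^ (-(3 + 2 * γ))) := by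
  obtain ⟨C, hC, hbound⟩ :=
    exists_integral_sq_mul_exp_neg_mul_sq_div_mul_rpow_le (3 + 2 * γ) hb two_pi_pos
  refine ⟨⟨C, hC, hbound⟩, ?_⟩
  refine .of_nonneg_of_le (fun k => ?_) (fun k => ?_)
    (((summable_int_exp_neg_mul_sq (div_pos hb two_pi_pos)).mul_left C).subtype {k | k ≠ 0})
  · refine mul_nonneg (sq_nonneg _) (setIntegral_nonneg measurableSet_Ioo fun t ht => ?_)
    have := ht.1; positivity
  · rw [← integral_const_mul]
    simp_rw [← mul_assoc]
    refine (hbound k k.2).trans_eq ?_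
    simp only [Function.comp_apply]
    ring_nf

theorem gaussian_kernel_integral_decay (a b c γ : ℝ) (ha : 0 < a) (hb : 0 < b)
    (hc : 0 ≤ c) (hγ : 0 ≤ γ) :
    (∃ C > 0, ∀ k : ℤ, k ≠ 0 →
      (∫ t in Set.Ioo (0 : ℝ) (2 * π),
          (k : ℝ) ^ 2 * Real.exp (-(b * (k : ℝ) ^ 2) / t) * t ^ (-(3 + 2 * γ))) ≤
        C * Real.exp (-(b * (k : ℝ) ^ 2) / (2 * π))) ∧
    Summable (fun k : {k : ℤ // k ≠ 0} =>
      ((k : ℤ) : ℝ) ^ 2 *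
        ∫ t in Set.Ioo (0 : ℝ) (2 * π),
          Real.exp (-(b * ((k : ℤ) : ℝ) ^ 2) / t) * t ^ (-(3 + 2 * γ))) :=
  gaussian_kernel_integral_decay_general b γ hb
end
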